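/- Fix an integer p ≥ 2. For every natural number i, the class of D^i η_n has infinite order in the quotient group ℤⁿ / image(D^p − 1): for every nonzero integer m, the element m · D^i η_n does not belong to image(D^p − 1). -/
import Mathlib


/-!
`ℤⁿ` is the abelian group of functions `Fin n → ℤ` (coordinates `1,…,n`
corresponding to indices `0,…,n-1`).  `shiftE n` is the shift operator `t`,
`(tη)(i) = η(i+1)` for `i < n` and `(tη)(n) = 0`, and
`DE n = 1 + t + t² + … + t^{n−1}`.
-/

noncomputable section

/-- The shift operator `t` on `ℤⁿ`. -/
def shiftE (n : ℕ) : Module.End ℤ (Fin n → ℤ) :=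
  (AddMonoidHom.mk' (fun (η : Fin n → ℤ) (i : Fin n) => if h : (i : ℕ) + 1 < n then η ⟨(i : ℕ) + 1, h⟩ else 0) (by
    intro a b
    funext i
    by_cases h : (i : ℕ) + 1 < n <;> simp [h])).toIntLinearMap

/-- The operator `D = 1 + t + t² + … + t^{n−1}` on `ℤⁿ`. -/
def DE (n : ℕ) : Module.End ℤ (Fin n → ℤ) := ∑ i ∈ Finset.range n, shiftE n ^ i

lemma shiftE_last (n : ℕ) (hn : 1 ≤ n) (η : Fin n → ℤ) :
    shiftE n η ⟨n - 1, by omega⟩ = 0 := by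
  have h : ¬ (n - 1 + 1 < n) := by omega
  simp [shiftE, h]

lemma shiftE_pow_last (n : ℕ) (hn : 1 ≤ n) (k : ℕ) (hk : 1 ≤ k) (η : Fin n → ℤ) :
    (shiftE n ^ k) η ⟨n - 1, by omega⟩ = 0 := by
  obtain ⟨j, rfl⟩ := Nat.exists_eq_add_of_le hk
  rw [pow_add, pow_one]
  exact shiftE_last n hn _

lemma DE_last (n : ℕ) (hn : 1 ≤ n) (η : Fin n → ℤ) :
    DE n η ⟨n - 1, by omega⟩ = η ⟨n - 1, by omega⟩ := by
  have : DE n η = ∑ i ∈ Finset.range n, (shiftE n ^ i) η := by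
    simp [DE, LinearMap.sum_apply]
  rw [this, Finset.sum_apply]
  rw [Finset.sum_eq_single 0]
  · simp
  · intro b _ hb
    exact shiftE_pow_last n hn b (by omega) η
  · intro h
    exact absurd (Finset.mem_range.mpr (by omega)) h

lemma DE_pow_last (n : ℕ) (hn : 1 ≤ n) (k : ℕ) (η : Fin n → ℤ) :
    (DE n ^ k) η ⟨n - 1, by omega⟩ = η ⟨n - 1, by omega⟩ := by
  induction k with
  | zero => simp
  | succ k ih =>
    rw [pow_succ', Module.End.mul_apply, DE_last n hn, ih]

/-- For `p ≥ 2` and every `i`, the class of `D^i η_n` has infinite order in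
`ℤⁿ / image(D^p − 1)`: for every nonzero integer `m`, `m • D^i η_n` is not in
`image(D^p − 1)`. -/
theorem Dpow_etaN_infinite_order (n : ℕ) (hn : 2 ≤ n) (p : ℕ) (hp : 2 ≤ p) :
    ∀ (i : ℕ) (m : ℤ), m ≠ 0 →
      m • (DE n ^ i) (Pi.single (⟨n - 1, by omega⟩ : Fin n) (1 : ℤ)) ∉
        LinearMap.range (DE n ^ p - 1) := by
  intro i m hm ⟨η, hη⟩
  have h1 : (1 : ℕ) ≤ n := by omega
  have hL : ((DE n ^ p - 1) η) ⟨n - 1, by omega⟩ = 0 := by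
    have : ((DE n ^ p - 1) η) = (DE n ^ p) η - η := by
      simp [LinearMap.sub_apply]
    rw [this, Pi.sub_apply, DE_pow_last n h1, sub_self]
  have hR : (m • (DE n ^ i) (Pi.single (⟨n - 1, by omega⟩ : Fin n) (1 : ℤ)))
      ⟨n - 1, by omega⟩ = m := by
    rw [Pi.smul_apply, DE_pow_last n h1]
    simp
  rw [← hη] at hR
  rw [hL] at hR
  exact hm hR.symm
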